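/- arXiv:1806.02516 — 7 statements merged into one kernel-verified Lean document; each statement's English description precedes it below -/
import Mathlib

section
/- Let n ≥ 2, 0 < ε ≤ 1/4 and α > 0. Define A = {y' ∈ ℝ^{n-1} : 1 < |y'| < 2 and -2 < y_i < -1 for all 1 ≤ i ≤ n-1}, g²(s) = (s - 1/16)^{-1/4}(-ln(s - 1/16))^{-1/4-ε} for 1/16 < s < 1/4 and g²(s) = 0 otherwise, and g_n(y', s) = α χ_A(y') g²(s). Then for every r with 1 ≤ r < ∞, the map s ↦ g_n(·, s) belongs to L⁴(ℝ; L^r(ℝ^{n-1})). -/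
/-!
On `(1/16, 1/4)` one has `(g²)⁴(s) = t⁻¹ (-log t)^(-1-4ε)` with `t = s - 1/16`, and
`t⁻¹ (-log t)^(-1-δ)` is integrable near `0` because it is, up to the factor `δ`, the
derivative of `(-log t)^(-δ)`, which tends to `0` as `t → 0⁺`; hence `g² ∈ L⁴(ℝ)`. Since
`‖χ_A c‖_{L^r} = |c| ‖χ_A‖_{L^r}`, the `L^r`-norm of the slice at time `s` is a constant
multiple of `|α g²(s)|`.
-/

open MeasureTheory Real Set Filter

open scoped ENNReal

section NegLogRpow

variable {δ : ℝ}

lemma hasDerivAt_neg_log_rpow {t : ℝ} (ht : 0 < t) (ht1 : t < 1) :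
    HasDerivAt (fun x => (-log x) ^ (-δ)) (δ * (t⁻¹ * (-log t) ^ (-1 - δ))) t := by
  have hlog : 0 < -log t := neg_pos.2 (log_neg ht ht1)
  refine ((hasDerivAt_log ht.ne').neg.rpow_const (p := -δ) (Or.inl hlog.ne')).congr_deriv ?_
  rw [show -δ - 1 = -1 - δ by ring, Pi.neg_apply]
  ring

lemma continuousWithinAt_neg_log_rpow_zero (hδ : 0 < δ) :
    ContinuousWithinAt (fun x : ℝ => (-log x) ^ (-δ)) (Ici 0) 0 := by
  rw [← continuousWithinAt_Ioi_iff_Ici, ContinuousWithinAt]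
  simpa [Function.comp_def, zero_rpow (neg_ne_zero.2 hδ.ne')] using
    (tendsto_rpow_neg_atTop hδ).comp (tendsto_neg_atBot_atTop.comp tendsto_log_nhdsGT_zero)

lemma integrableOn_inv_mul_neg_log_rpow {a : ℝ} (hδ : 0 < δ) (ha : a < 1) :
    IntegrableOn (fun t : ℝ => t⁻¹ * (-log t) ^ (-1 - δ)) (Ioo 0 a) := by
  have hcont : ContinuousOn (fun x : ℝ => (-log x) ^ (-δ)) (Icc 0 a) := by
    intro x hx
    rcases hx.1.eq_or_lt with rfl | hx0
    · exact (continuousWithinAt_neg_log_rpow_zero hδ).mono Icc_subset_Ici_self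
    · exact ((continuousAt_log hx0.ne').neg.rpow_const
        (Or.inl (neg_pos.2 (log_neg hx0 (hx.2.trans_lt ha))).ne')).continuousWithinAt
  have hnonneg : ∀ t ∈ Ioo 0 a, 0 ≤ δ * (t⁻¹ * (-log t) ^ (-1 - δ)) := fun t ht =>
    mul_nonneg hδ.le <| mul_nonneg (inv_nonneg.2 ht.1.le) <|
      rpow_nonneg (neg_nonneg.2 (log_nonpos ht.1.le (ht.2.trans ha).le)) _
  have hderiv := intervalIntegral.integrableOn_deriv_of_nonneg hcont
    (fun t ht => hasDerivAt_neg_log_rpow ht.1 (ht.2.trans ha)) hnonneg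
  exact (integrable_const_mul_iff (IsUnit.mk0 δ hδ.ne') _).1 (hderiv.mono_set Ioo_subset_Ioc_self)

lemma memLp_indicator_rpow_mul_neg_log_rpow {p ε a : ℝ} (hp : 0 < p) (hε : 0 < ε)
    (ha : a < 1) :
    MemLp ((Ioo 0 a).indicator fun t : ℝ => t ^ (-(1 / p)) * (-log t) ^ (-(1 / p) - ε))
      (ENNReal.ofReal p) := by
  have hmeas : AEStronglyMeasurable
      ((Ioo 0 a).indicator fun t : ℝ => t ^ (-(1 / p)) * (-log t) ^ (-(1 / p) - ε)) :=
    ((by fun_prop : Measurable fun t : ℝ => t ^ (-(1 / p)) * (-log t) ^ (-(1 / p) - ε)).indicator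
      measurableSet_Ioo).aestronglyMeasurable
  rw [← integrable_norm_rpow_iff hmeas (by simpa using hp) ENNReal.ofReal_ne_top,
    ENNReal.toReal_ofReal hp.le]
  have hpow : (fun t => ‖(Ioo 0 a).indicator
        (fun t : ℝ => t ^ (-(1 / p)) * (-log t) ^ (-(1 / p) - ε)) t‖ ^ p) =
      (Ioo 0 a).indicator fun t => t⁻¹ * (-log t) ^ (-1 - p * ε) := by
    funext t
    by_cases ht : t ∈ Ioo 0 a
    · have hlog : 0 ≤ -log t := neg_nonneg.2 (log_nonpos ht.1.le (ht.2.trans ha).le)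
      have ht0 := ht.1.le
      rw [indicator_of_mem ht, indicator_of_mem ht,
        norm_of_nonneg (mul_nonneg (rpow_nonneg ht0 _) (rpow_nonneg hlog _)),
        mul_rpow (rpow_nonneg ht0 _) (rpow_nonneg hlog _), ← rpow_mul ht0, ← rpow_mul hlog,
        ← rpow_neg_one]
      congr 2 <;> field_simp
    · simp [indicator_of_notMem ht, zero_rpow hp.ne']
  rw [hpow, integrable_indicator_iff measurableSet_Ioo]
  exact integrableOn_inv_mul_neg_log_rpow (by positivity) ha

end NegLogRpow

lemma memLp_toReal_eLpNorm_indicator_const {X T : Type*} [MeasurableSpace X] [MeasurableSpace T]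
    {μ : Measure X} {ν : Measure T} (A : Set X) (p : ℝ≥0∞) {q : ℝ≥0∞} {f : T → ℝ}
    (hf : MemLp f q ν) :
    MemLp (fun s => (eLpNorm (A.indicator fun _ => f s) p μ).toReal) q ν := by
  have hscale : ∀ c : ℝ,
      (eLpNorm (A.indicator fun _ => c) p μ).toReal =
        ‖c‖ * (eLpNorm (A.indicator fun _ => (1 : ℝ)) p μ).toReal := fun c => by
    have hsmul : (A.indicator fun _ => c) = c • A.indicator fun _ => (1 : ℝ) := by
      ext y; by_cases hy : y ∈ A <;> simp [hy]
    rw [hsmul, eLpNorm_const_smul, ENNReal.toReal_mul, toReal_enorm]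
  rw [funext fun s => hscale (f s)]
  exact hf.norm.mul_const _

theorem stmt_2_general (n : ℕ) (ε α : ℝ) (hε : 0 < ε)
    (A : Set (EuclideanSpace ℝ (Fin (n-1))))
    (hA : A = {y' : EuclideanSpace ℝ (Fin (n-1)) |
      1 < ‖y'‖ ∧ ‖y'‖ < 2 ∧ ∀ i : Fin (n-1), -2 < y' i ∧ y' i < -1})
    (g2 : ℝ → ℝ)
    (hg2 : ∀ s : ℝ, g2 s =
      if 1/16 < s ∧ s < 1/4 then
        (s - 1/16) ^ (-(1/4) : ℝ) * (-Real.log (s - 1/16)) ^ (-(1/4) - ε)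
      else 0)
    (gn : EuclideanSpace ℝ (Fin (n-1)) → ℝ → ℝ)
    (hgn : ∀ y' s, gn y' s = α * A.indicator (fun _ => (1:ℝ)) y' * g2 s)
    (r : ℝ) :
    (∀ s : ℝ, MemLp (fun y' => gn y' s) (ENNReal.ofReal r) volume) ∧
    MemLp (fun s : ℝ =>
      (eLpNorm (fun y' => gn y' s) (ENNReal.ofReal r) volume).toReal) 4 volume := by
  have hslice : ∀ s, (fun y' => gn y' s) = A.indicator fun _ => α * g2 s := fun s => by
    ext y'
    by_cases hy : y' ∈ A <;> simp [hgn, hy]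
  have hA_open : IsOpen A := by
    simp only [hA, ofPred_and, ofPred_forall]
    exact (isOpen_lt continuous_const continuous_norm).inter
      ((isOpen_lt continuous_norm continuous_const).inter <| isOpen_iInter_of_finite fun i =>
        (isOpen_lt continuous_const (by fun_prop)).inter
          (isOpen_lt (by fun_prop) continuous_const))
  have hA_finite : volume A ≠ ∞ :=
    (Metric.isBounded_ball.subset fun y' hy' =>
      mem_ball_zero_iff.2 (hA ▸ hy').2.1).measure_lt_top.ne
  have hg2_shift : g2 = fun s => (Ioo 0 (3/16)).indicator
      (fun t : ℝ => t ^ (-(1/4) : ℝ) * (-log t) ^ (-(1/4) - ε)) (s - 1/16) := by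
    ext s
    by_cases hs : 1/16 < s ∧ s < 1/4
    · have ht : s - 1/16 ∈ Ioo (0 : ℝ) (3/16) := ⟨by linarith [hs.1], by linarith [hs.2]⟩
      rw [hg2, if_pos hs, indicator_of_mem ht]
    · have ht : s - 1/16 ∉ Ioo (0 : ℝ) (3/16) := fun ht =>
        hs ⟨by linarith [ht.1], by linarith [ht.2]⟩
      rw [hg2, if_neg hs, indicator_of_notMem ht]
  have hg2_memLp : MemLp g2 4 volume := by
    rw [hg2_shift]
    have := (memLp_indicator_rpow_mul_neg_log_rpow (p := 4) (a := 3/16) (by norm_num) hε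
      (by norm_num)).comp_measurePreserving (measurePreserving_sub_right volume (1/16))
    rwa [ENNReal.ofReal_ofNat] at this
  simp only [hslice]
  exact ⟨fun s => memLp_indicator_const _ hA_open.measurableSet _ (Or.inr hA_finite),
    memLp_toReal_eLpNorm_indicator_const A _ (hg2_memLp.const_mul α)⟩

/-- The boundary data `g_n(y',s) = α χ_A(y') g²(s)` belongs to `L⁴(ℝ; L^r(ℝ^{n-1}))`
for every `1 ≤ r < ∞`: each time slice lies in `L^r(ℝ^{n-1})` and the map
`s ↦ ‖g_n(·,s)‖_{L^r}` belongs to `L⁴(ℝ)`. -/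
theorem stmt_2 (n : ℕ) (hn : 2 ≤ n) (ε α : ℝ) (hε : 0 < ε) (hε' : ε ≤ 1/4) (hα : 0 < α)
    (A : Set (EuclideanSpace ℝ (Fin (n-1))))
    (hA : A = {y' : EuclideanSpace ℝ (Fin (n-1)) |
      1 < ‖y'‖ ∧ ‖y'‖ < 2 ∧ ∀ i : Fin (n-1), -2 < y' i ∧ y' i < -1})
    (g2 : ℝ → ℝ)
    (hg2 : ∀ s : ℝ, g2 s =
      if 1/16 < s ∧ s < 1/4 then
        (s - 1/16) ^ (-(1/4) : ℝ) * (-Real.log (s - 1/16)) ^ (-(1/4) - ε)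
      else 0)
    (gn : EuclideanSpace ℝ (Fin (n-1)) → ℝ → ℝ)
    (hgn : ∀ y' s, gn y' s = α * A.indicator (fun _ => (1:ℝ)) y' * g2 s)
    (r : ℝ) (hr : 1 ≤ r) :
    (∀ s : ℝ, MemLp (fun y' => gn y' s) (ENNReal.ofReal r) volume) ∧
    MemLp (fun s : ℝ =>
      (eLpNorm (fun y' => gn y' s) (ENNReal.ofReal r) volume).toReal) 4 volume :=
  stmt_2_general n ε α hε A hA g2 hg2 gn hgn r
end

section
/- Let n ≥ 2. There exist constants C, c > 0, depending only on n, such that for every X' ∈ ℝ^{n-1} with X' ≠ 0 and every τ > 0, the function z' ↦ (z₁/|z'|ⁿ)(e^{-|X'-z'|²/τ} - e^{-|X'|²/τ}) is Lebesgue integrable on the ball {z' ∈ ℝ^{n-1} : |z'| ≤ |X'|/10}, and | ∫_{|z'| ≤ |X'|/10} (z₁/|z'|ⁿ)(e^{-|X'-z'|²/τ} - e^{-|X'|²/τ}) dz' | ≤ C e^{-c |X'|²/τ}. -/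
/-!
On the ball `‖z'‖ ≤ ‖X'‖/10` the mean value bound for `exp` gives
`|e^{-‖X'-z'‖²/τ} - e^{-‖X'‖²/τ}| ≤ 3‖X'‖‖z'‖/τ · e^{-(4/5)‖X'‖²/τ}`, so the integrand is dominated
by a multiple of `‖z'‖^{2-n}`. In dimension `d = n - 1` this is `‖z'‖^{1-d}`, whose integral over a
ball of radius `r` is `d |B₁| r` in polar coordinates. The resulting factor `‖X'‖²/τ` is absorbed
by giving up half of the Gaussian decay.
-/

open MeasureTheory Real Set Metric Module

section RadialPower

variable {E : Type*} [NormedAddCommGroup E] [NormedSpace ℝ E] [FiniteDimensional ℝ E]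
  [MeasurableSpace E] [BorelSpace E] [Nontrivial E] (μ : Measure E) [μ.IsAddHaarMeasure]

lemma integrableOn_closedBall_inv_norm_pow_finrank_sub_one (r : ℝ) :
    IntegrableOn (fun x : E => (‖x‖ ^ (finrank ℝ E - 1))⁻¹) (closedBall 0 r) μ := by
  have hradial : IntegrableOn (fun y : ℝ => y ^ (finrank ℝ E - 1) • (y ^ (finrank ℝ E - 1))⁻¹)
      (Ioo 0 (r + 1)) :=
    (integrableOn_const measure_Ioo_lt_top.ne (C := (1 : ℝ))).congr_fun
      (fun y hy => (mul_inv_cancel₀ (pow_ne_zero _ hy.1.ne')).symm) measurableSet_Ioo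
  exact ((integrableOn_fun_norm_addHaar μ (f := fun y => (y ^ (finrank ℝ E - 1))⁻¹)).2
    hradial).mono_set (closedBall_subset_ball (lt_add_one r))

lemma setIntegral_closedBall_inv_norm_pow_finrank_sub_one {r : ℝ} (hr : 0 ≤ r) :
    ∫ x in closedBall 0 r, (‖x‖ ^ (finrank ℝ E - 1))⁻¹ ∂μ =
      finrank ℝ E * μ.real (ball 0 1) * r := by
  have hrad : ∀ y ∈ Ioi (0 : ℝ), y ^ (finrank ℝ E - 1) • (Iic r).indicator
      (fun y => (y ^ (finrank ℝ E - 1))⁻¹) y = (Iic r).indicator 1 y := by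
    intro y hy
    by_cases hyr : y ∈ Iic r
    · simp [hyr, mul_inv_cancel₀ (pow_ne_zero _ (mem_Ioi.1 hy).ne')]
    · simp [hyr]
  calc ∫ x in closedBall 0 r, (‖x‖ ^ (finrank ℝ E - 1))⁻¹ ∂μ
      = ∫ x, (Iic r).indicator (fun y => (y ^ (finrank ℝ E - 1))⁻¹) ‖x‖ ∂μ := by
        rw [← integral_indicator measurableSet_closedBall]
        congr 1 with x
        simp [indicator]
    _ = finrank ℝ E * μ.real (ball 0 1) * r := by
        rw [integral_fun_norm_addHaar, setIntegral_congr_fun measurableSet_Ioi hrad,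
          integral_indicator measurableSet_Iic, Measure.restrict_restrict measurableSet_Iic]
        simp [Iic_inter_Ioi, hr, mul_assoc]

variable {F : Type*} [NormedAddCommGroup F] {f : E → F} {D r : ℝ}

lemma integrableOn_closedBall_of_norm_le_inv_norm_pow (hf : AEStronglyMeasurable f μ)
    (hbound : ∀ x ∈ closedBall (0 : E) r, ‖f x‖ ≤ D * (‖x‖ ^ (finrank ℝ E - 1))⁻¹) :
    IntegrableOn f (closedBall 0 r) μ :=
  ((integrableOn_closedBall_inv_norm_pow_finrank_sub_one μ r).const_mul D).mono' hf.restrict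
    ((ae_restrict_iff' measurableSet_closedBall).2 (.of_forall hbound))

lemma norm_setIntegral_closedBall_le_of_norm_le_inv_norm_pow [NormedSpace ℝ F] (hr : 0 ≤ r)
    (hbound : ∀ x ∈ closedBall (0 : E) r, ‖f x‖ ≤ D * (‖x‖ ^ (finrank ℝ E - 1))⁻¹) :
    ‖∫ x in closedBall 0 r, f x ∂μ‖ ≤ D * (finrank ℝ E * μ.real (ball 0 1) * r) := by
  rw [← setIntegral_closedBall_inv_norm_pow_finrank_sub_one μ hr, ← integral_const_mul]
  exact norm_integral_le_of_norm_le
    ((integrableOn_closedBall_inv_norm_pow_finrank_sub_one μ r).const_mul D)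
    ((ae_restrict_iff' measurableSet_closedBall).2 (.of_forall hbound))

end RadialPower

lemma abs_exp_sub_exp_le_mul_exp_max (x y : ℝ) : |exp x - exp y| ≤ |x - y| * exp (max x y) := by
  wlog h : y ≤ x generalizing x y
  · simpa only [abs_sub_comm, max_comm] using this y x (le_of_not_ge h)
  rw [abs_of_nonneg (sub_nonneg.2 (exp_le_exp.2 h)), abs_of_nonneg (sub_nonneg.2 h), max_eq_left h]
  have hy : exp y = exp x * exp (y - x) := by rw [← exp_add, add_sub_cancel]
  nlinarith [add_one_le_exp (y - x), exp_pos x]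

lemma mul_exp_neg_two_mul_le {c : ℝ} (hc : 0 < c) (s : ℝ) :
    s * exp (-(2 * c * s)) ≤ c⁻¹ * exp (-(c * s)) := by
  have hs : s ≤ c⁻¹ * exp (c * s) := by
    rw [le_inv_mul_iff₀ hc]
    linarith [add_one_le_exp (c * s)]
  calc s * exp (-(2 * c * s)) ≤ c⁻¹ * exp (c * s) * exp (-(2 * c * s)) := by gcongr
    _ = c⁻¹ * exp (-(c * s)) := by rw [mul_assoc, ← exp_add]; ring_nf

lemma abs_exp_neg_norm_sub_sq_sub_le {G : Type*} [SeminormedAddCommGroup G] {x z : G}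
    (hz : ‖z‖ ≤ ‖x‖ / 10) {τ : ℝ} (hτ : 0 < τ) :
    |exp (-‖x - z‖ ^ 2 / τ) - exp (-‖x‖ ^ 2 / τ)| ≤
      3 * ‖x‖ * ‖z‖ / τ * exp (-(4 / 5 * (‖x‖ ^ 2 / τ))) := by
  have hdist : |‖x - z‖ - ‖x‖| ≤ ‖z‖ := by
    simpa using abs_norm_sub_norm_le (x - z) x
  have hlow : 9 / 10 * ‖x‖ ≤ ‖x - z‖ := by linarith [(abs_le.1 hdist).1]
  have hupp : ‖x - z‖ ≤ 11 / 10 * ‖x‖ := by linarith [(abs_le.1 hdist).2]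
  have hexp_diff : |-‖x - z‖ ^ 2 / τ - -‖x‖ ^ 2 / τ| ≤ 3 * ‖x‖ * ‖z‖ / τ := by
    rw [← sub_div, abs_div, abs_of_pos hτ, div_le_div_iff_of_pos_right hτ,
      show -‖x - z‖ ^ 2 - -‖x‖ ^ 2 = (‖x‖ - ‖x - z‖) * (‖x‖ + ‖x - z‖) by ring, abs_mul,
      abs_sub_comm, abs_of_nonneg (by positivity : 0 ≤ ‖x‖ + ‖x - z‖)]
    nlinarith [norm_nonneg z, norm_nonneg x, abs_nonneg (‖x - z‖ - ‖x‖)]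
  have hmax : max (-‖x - z‖ ^ 2 / τ) (-‖x‖ ^ 2 / τ) ≤ -(4 / 5 * (‖x‖ ^ 2 / τ)) := by
    rw [show -(4 / 5 * (‖x‖ ^ 2 / τ)) = -(4 / 5 * ‖x‖ ^ 2) / τ by ring, max_le_iff,
      div_le_div_iff_of_pos_right hτ, div_le_div_iff_of_pos_right hτ]
    constructor <;> nlinarith [norm_nonneg x]
  exact (abs_exp_sub_exp_le_mul_exp_max _ _).trans
    (mul_le_mul hexp_diff (exp_le_exp.2 hmax) (exp_pos _).le (by positivity))

lemma abs_div_pow_mul_le_inv_pow {n : ℕ} (hn : 2 ≤ n) {t u a D : ℝ} (ht : 0 ≤ t) (hD : 0 ≤ D)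
    (hu : |u| ≤ t) (ha : |a| ≤ D * t) : |u / t ^ n * a| ≤ D * (t ^ (n - 2))⁻¹ := by
  rcases ht.eq_or_lt with rfl | ht
  · rw [abs_nonpos_iff.1 hu, zero_div, zero_mul, abs_zero]
    positivity
  have hpow : t ^ n = t ^ 2 * t ^ (n - 2) := by rw [← pow_add]; congr 1; omega
  calc |u / t ^ n * a| = |u| * |a| / t ^ n := by
        rw [abs_mul, abs_div, abs_of_pos (by positivity : 0 < t ^ n)]; ring
    _ ≤ t * (D * t) / t ^ n := by gcongr
    _ = D * (t ^ (n - 2))⁻¹ := by rw [hpow]; field_simp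

/-- Estimate of `J₂`: `|∫_{|z'| ≤ |X'|/10} (z₁/|z'|ⁿ)(e^{-|X'-z'|²/τ} - e^{-|X'|²/τ}) dz'|
≤ C e^{-c|X'|²/τ}`. -/
theorem stmt_5 (n : ℕ) (hn : 2 ≤ n) :
    ∃ C c : ℝ, 0 < C ∧ 0 < c ∧
      ∀ X' : EuclideanSpace ℝ (Fin (n-1)), X' ≠ 0 → ∀ τ : ℝ, 0 < τ →
        IntegrableOn
          (fun z' : EuclideanSpace ℝ (Fin (n-1)) =>
            (z' ⟨0, by omega⟩ / ‖z'‖^n) *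
              (Real.exp (-‖X' - z'‖^2/τ) - Real.exp (-‖X'‖^2/τ)))
          {z' : EuclideanSpace ℝ (Fin (n-1)) | ‖z'‖ ≤ ‖X'‖/10} volume ∧
        |∫ z' in {z' : EuclideanSpace ℝ (Fin (n-1)) | ‖z'‖ ≤ ‖X'‖/10},
            (z' ⟨0, by omega⟩ / ‖z'‖^n) *
              (Real.exp (-‖X' - z'‖^2/τ) - Real.exp (-‖X'‖^2/τ))| ≤
          C * Real.exp (-c * ‖X'‖^2/τ) := by
  have hdim : finrank ℝ (EuclideanSpace ℝ (Fin (n - 1))) = n - 1 := finrank_euclideanSpace_fin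
  have : Nontrivial (EuclideanSpace ℝ (Fin (n - 1))) :=
    Module.nontrivial_of_finrank_pos (R := ℝ) (by omega)
  set V := volume.real (ball (0 : EuclideanSpace ℝ (Fin (n - 1))) 1)
  have hV : 0 < V := ENNReal.toReal_pos (measure_ball_pos _ _ one_pos).ne' measure_ball_lt_top.ne
  have hn1 : (0 : ℝ) < (n - 1 : ℕ) := by exact_mod_cast (by omega : 0 < n - 1)
  refine ⟨3 / 4 * (n - 1 : ℕ) * V, 2 / 5, by positivity, by norm_num, fun X _ τ hτ => ?_⟩
  set D := 3 * ‖X‖ / τ * exp (-(4 / 5 * (‖X‖ ^ 2 / τ))) with hD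
  have hball : {z : EuclideanSpace ℝ (Fin (n - 1)) | ‖z‖ ≤ ‖X‖ / 10} = closedBall 0 (‖X‖ / 10) := by
    ext; simp
  have hbound : ∀ z ∈ closedBall (0 : EuclideanSpace ℝ (Fin (n - 1))) (‖X‖ / 10),
      ‖z ⟨0, by omega⟩ / ‖z‖ ^ n * (exp (-‖X - z‖ ^ 2 / τ) - exp (-‖X‖ ^ 2 / τ))‖ ≤
        D * (‖z‖ ^ (finrank ℝ (EuclideanSpace ℝ (Fin (n - 1))) - 1))⁻¹ := by
    intro z hz
    rw [hdim, Nat.sub_sub, Real.norm_eq_abs]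
    refine abs_div_pow_mul_le_inv_pow hn (norm_nonneg z) (by positivity) (PiLp.norm_apply_le z _) ?_
    convert abs_exp_neg_norm_sub_sq_sub_le (mem_closedBall_zero_iff.1 hz) hτ using 1
    ring
  rw [hball]
  refine ⟨integrableOn_closedBall_of_norm_le_inv_norm_pow volume (by fun_prop) hbound, ?_⟩
  calc _ ≤ D * ((n - 1 : ℕ) * V * (‖X‖ / 10)) := by
        simpa only [Real.norm_eq_abs, hdim] using
          norm_setIntegral_closedBall_le_of_norm_le_inv_norm_pow volume (by positivity) hbound
    _ = 3 / 10 * (n - 1 : ℕ) * V * (‖X‖ ^ 2 / τ * exp (-(2 * (2 / 5) * (‖X‖ ^ 2 / τ)))) := by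
        rw [hD]; ring_nf
    _ ≤ 3 / 10 * (n - 1 : ℕ) * V * ((2 / 5)⁻¹ * exp (-(2 / 5 * (‖X‖ ^ 2 / τ)))) :=
        mul_le_mul_of_nonneg_left (mul_exp_neg_two_mul_le (by norm_num) _) (by positivity)
    _ = 3 / 4 * (n - 1 : ℕ) * V * exp (-(2 / 5) * ‖X‖ ^ 2 / τ) := by ring_nf
end

section
/- Let 0 < ε ≤ 1/4. There exists a constant c > 0 such that for every T with 0 < T ≤ 1/2, ∫₀^T (T - s)^{-1/2} s^{-1/4} (-ln s)^{-1/4-ε} ds ≤ c T^{1/4} (-ln T)^{-1/4-ε}. -/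
open MeasureTheory Real Set

lemma aux_prod_le (a b : ℝ) (ha : 0 < a) (hb : 0 < b) :
    a ^ (-(1/2) : ℝ) * b ^ (-(1/4) : ℝ) ≤ a ^ (-(3/4) : ℝ) + b ^ (-(3/4) : ℝ) := by
  rcases le_total a b with h | h
  · calc a ^ (-(1/2) : ℝ) * b ^ (-(1/4) : ℝ)
        ≤ a ^ (-(1/2) : ℝ) * a ^ (-(1/4) : ℝ) := by
          apply mul_le_mul_of_nonneg_left
            (Real.rpow_le_rpow_of_nonpos ha h (by norm_num))
            (Real.rpow_nonneg ha.le _)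
      _ = a ^ (-(3/4) : ℝ) := by
          rw [← Real.rpow_add ha]; norm_num
      _ ≤ a ^ (-(3/4) : ℝ) + b ^ (-(3/4) : ℝ) :=
          le_add_of_nonneg_right (Real.rpow_nonneg hb.le _)
  · calc a ^ (-(1/2) : ℝ) * b ^ (-(1/4) : ℝ)
        ≤ b ^ (-(1/2) : ℝ) * b ^ (-(1/4) : ℝ) := by
          apply mul_le_mul_of_nonneg_right
            (Real.rpow_le_rpow_of_nonpos hb h (by norm_num))
            (Real.rpow_nonneg hb.le _)
      _ = b ^ (-(3/4) : ℝ) := by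
          rw [← Real.rpow_add hb]; norm_num
      _ ≤ a ^ (-(3/4) : ℝ) + b ^ (-(3/4) : ℝ) :=
          le_add_of_nonneg_left (Real.rpow_nonneg ha.le _)

theorem stmt_9 (ε : ℝ) (hε : 0 < ε) (hε' : ε ≤ 1/4) :
    ∃ c : ℝ, 0 < c ∧ ∀ T : ℝ, 0 < T → T ≤ 1/2 →
      (∫ s in Ioo (0:ℝ) T,
          (T - s) ^ (-(1/2) : ℝ) * s ^ (-(1/4) : ℝ) * (-Real.log s) ^ (-(1/4) - ε)) ≤
        c * T ^ ((1:ℝ)/4) * (-Real.log T) ^ (-(1/4) - ε) := by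
  refine ⟨8, by norm_num, fun T hT hT' => ?_⟩
  have hlogT : 0 < -Real.log T := by
    have : Real.log T < 0 := Real.log_neg hT (by linarith)
    linarith
  set L : ℝ := (-Real.log T) ^ (-(1/4) - ε) with hL
  have hLpos : 0 < L := Real.rpow_pos_of_pos hlogT _
  -- interval integrability of the dominating function
  have hint1 : IntegrableOn (fun s : ℝ => s ^ (-(3/4) : ℝ)) (Ioo 0 T) := by
    have := (intervalIntegral.intervalIntegrable_rpow' (a := 0) (b := T) (r := (-(3/4) : ℝ)) (by norm_num)).1
    exact this.mono_set Ioo_subset_Ioc_self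
  have hint2 : IntegrableOn (fun s : ℝ => (T - s) ^ (-(3/4) : ℝ)) (Ioo 0 T) := by
    have h := (intervalIntegral.intervalIntegrable_rpow' (a := 0) (b := T) (r := (-(3/4) : ℝ))
      (by norm_num)).comp_sub_left T
    simp only [sub_zero, sub_self] at h
    have := h.symm.1
    exact this.mono_set Ioo_subset_Ioc_self
  have hintg : IntegrableOn
      (fun s : ℝ => ((T - s) ^ (-(3/4) : ℝ) + s ^ (-(3/4) : ℝ)) * L) (Ioo 0 T) :=
    (hint2.add hint1).mul_const L
  -- pointwise bound
  have hbound : ∀ s ∈ Ioo (0:ℝ) T,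
      (T - s) ^ (-(1/2) : ℝ) * s ^ (-(1/4) : ℝ) * (-Real.log s) ^ (-(1/4) - ε)
        ≤ ((T - s) ^ (-(3/4) : ℝ) + s ^ (-(3/4) : ℝ)) * L := by
    intro s hs
    obtain ⟨hs0, hsT⟩ := hs
    have hTs : 0 < T - s := by linarith
    have hlog : (-Real.log s) ^ (-(1/4) - ε) ≤ L := by
      apply Real.rpow_le_rpow_of_nonpos hlogT _ (by linarith)
      have : Real.log s ≤ Real.log T := Real.log_le_log hs0 hsT.le
      linarith
    calc (T - s) ^ (-(1/2) : ℝ) * s ^ (-(1/4) : ℝ) * (-Real.log s) ^ (-(1/4) - ε)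
        ≤ (T - s) ^ (-(1/2) : ℝ) * s ^ (-(1/4) : ℝ) * L := by
          apply mul_le_mul_of_nonneg_left hlog
          exact mul_nonneg (Real.rpow_nonneg hTs.le _) (Real.rpow_nonneg hs0.le _)
      _ ≤ ((T - s) ^ (-(3/4) : ℝ) + s ^ (-(3/4) : ℝ)) * L :=
          mul_le_mul_of_nonneg_right (aux_prod_le _ _ hTs hs0) hLpos.le
  have hmono : (∫ s in Ioo (0:ℝ) T,
      (T - s) ^ (-(1/2) : ℝ) * s ^ (-(1/4) : ℝ) * (-Real.log s) ^ (-(1/4) - ε))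
      ≤ ∫ s in Ioo (0:ℝ) T, ((T - s) ^ (-(3/4) : ℝ) + s ^ (-(3/4) : ℝ)) * L := by
    have h1 : (0 : ℝ → ℝ) ≤ᵐ[volume.restrict (Ioo (0:ℝ) T)]
        fun s => (T - s) ^ (-(1/2) : ℝ) * s ^ (-(1/4) : ℝ) * (-Real.log s) ^ (-(1/4) - ε) := by
      filter_upwards [ae_restrict_mem measurableSet_Ioo] with s hs
      have hTs : (0:ℝ) < T - s := by linarith [hs.2]
      have hls : Real.log s < 0 := Real.log_neg hs.1 (by linarith [hs.2])
      have h0 : (0:ℝ) ≤ -Real.log s := by linarith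
      exact mul_nonneg (mul_nonneg (Real.rpow_nonneg hTs.le _)
        (Real.rpow_nonneg hs.1.le _)) (Real.rpow_nonneg h0 _)
    have h2 : (fun s => (T - s) ^ (-(1/2) : ℝ) * s ^ (-(1/4) : ℝ) * (-Real.log s) ^ (-(1/4) - ε))
        ≤ᵐ[volume.restrict (Ioo (0:ℝ) T)]
        fun s => ((T - s) ^ (-(3/4) : ℝ) + s ^ (-(3/4) : ℝ)) * L := by
      filter_upwards [ae_restrict_mem measurableSet_Ioo] with s hs
      exact hbound s hs
    exact integral_mono_of_nonneg h1 hintg h2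
  refine hmono.trans ?_
  -- compute the integral of the dominating function
  have hI1 : (∫ s in (0:ℝ)..T, s ^ (-(3/4) : ℝ)) = 4 * T ^ ((1:ℝ)/4) := by
    rw [integral_rpow (Or.inl (by norm_num))]
    norm_num
    ring
  have hI2 : (∫ s in (0:ℝ)..T, (T - s) ^ (-(3/4) : ℝ)) = 4 * T ^ ((1:ℝ)/4) := by
    rw [intervalIntegral.integral_comp_sub_left (fun x => x ^ (-(3/4) : ℝ)) T]
    simpa using hI1
  have key : (∫ s in Ioo (0:ℝ) T, ((T - s) ^ (-(3/4) : ℝ) + s ^ (-(3/4) : ℝ)) * L)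
      = 8 * T ^ ((1:ℝ)/4) * L := by
    rw [← integral_Ioc_eq_integral_Ioo, ← intervalIntegral.integral_of_le hT.le]
    rw [intervalIntegral.integral_mul_const, intervalIntegral.integral_add]
    · rw [hI1, hI2]; ring
    · exact ((intervalIntegral.intervalIntegrable_rpow' (a := 0) (b := T) (r := (-(3/4) : ℝ))
        (by norm_num)).comp_sub_left T).symm.mono_set (by
          rw [uIcc_of_le hT.le, sub_zero, sub_self, uIcc_of_le hT.le])
    · exact intervalIntegral.intervalIntegrable_rpow' (by norm_num)
  rw [key]
end

section
/- Let 0 < ε ≤ 1/4. There exists a constant c > 0 such that for every T with 0 < T ≤ 1/2 and every real number a, ∫₀^{T/2} s^{-1/4} (-ln s)^{-1/4-ε} (T - s)^{-3/2} e^{-a²/(T-s)} ds ≥ c T^{-3/4} (-ln T)^{-1/4-ε} e^{-2a²/T}. -/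
open MeasureTheory Real Set

/-!
On `(T/4, T/2)` every factor of the integrand is bounded below by its value at a comparable
point: `s ^ α ≥ T ^ α` and `(T - s) ^ β ≥ T ^ β` for nonpositive exponents, `-log s ≤ 3 (-log T)`
because `T ≤ 1/2` makes `log 4` at most `2 (-log T)`, and `T - s ≥ T/2` bounds the Gaussian factor
by `exp (-2a²/T)`. Integrating this constant over an interval of length `T/4` gives the bound with
`c = 3 ^ (-1/4 - ε) / 4`; the integrand is nonnegative and integrable on `(0, T/2)` (it is
dominated by a multiple of `s ^ α` with `α > -1`), so the integral over `(0, T/2)` is larger still.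
-/

noncomputable def heatIntegrand (α p β T a s : ℝ) : ℝ :=
  s ^ α * (-log s) ^ p * (T - s) ^ β * exp (-(a ^ 2) / (T - s))

lemma log_two_le_neg_log {s : ℝ} (hs : 0 < s) (hs2 : s ≤ 1 / 2) : log 2 ≤ -log s := by
  have := log_le_log hs hs2
  rw [one_div, log_inv] at this
  linarith

lemma neg_log_le_three_mul_neg_log {s T : ℝ} (hT : 0 < T) (hT2 : T ≤ 1 / 2) (hs : T / 4 ≤ s) :
    -log s ≤ 3 * -log T := by
  have hlog4 : log 4 = 2 * log 2 := by
    rw [show (4 : ℝ) = 2 ^ 2 by norm_num, log_pow]; push_cast; ring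
  have h := log_le_log (by positivity) hs
  rw [log_div hT.ne' (by norm_num), hlog4] at h
  linarith [log_two_le_neg_log hT hT2]

section

variable {α p β T a : ℝ}

lemma heatIntegrand_nonneg {s : ℝ} (hs0 : 0 < s) (hs1 : s ≤ 1) (hsT : s < T) :
    0 ≤ heatIntegrand α p β T a s := by
  have hlog : 0 ≤ -log s := neg_nonneg.2 (log_nonpos hs0.le hs1)
  have hTs : 0 < T - s := sub_pos.2 hsT
  unfold heatIntegrand
  positivity

lemma measurable_heatIntegrand : Measurable (heatIntegrand α p β T a) := by
  unfold heatIntegrand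
  fun_prop

lemma heatIntegrand_le (hp : p ≤ 0) (hβ : β ≤ 0) (hT : T ≤ 1) {s : ℝ} (hs : s ∈ Ioo 0 (T / 2)) :
    heatIntegrand α p β T a s ≤ (log 2) ^ p * (T / 2) ^ β * s ^ α := by
  obtain ⟨hs0, hsT⟩ := hs
  have hTs : 0 < T - s := by linarith
  have hlog : (-log s) ^ p ≤ (log 2) ^ p :=
    rpow_le_rpow_of_nonpos (log_pos one_lt_two) (log_two_le_neg_log hs0 (by linarith)) hp
  have hpow : (T - s) ^ β ≤ (T / 2) ^ β := rpow_le_rpow_of_nonpos (by linarith) (by linarith) hβ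
  have hexp : exp (-(a ^ 2) / (T - s)) ≤ 1 :=
    exp_le_one_iff.2 (div_nonpos_of_nonpos_of_nonneg (neg_nonpos.2 (sq_nonneg a)) hTs.le)
  have hT0 : 0 < T := by linarith
  have hTsβ : 0 ≤ (T - s) ^ β := (rpow_pos_of_pos hTs β).le
  calc heatIntegrand α p β T a s
      ≤ s ^ α * (log 2) ^ p * (T / 2) ^ β * 1 := by
        unfold heatIntegrand
        gcongr
    _ = (log 2) ^ p * (T / 2) ^ β * s ^ α := by ring

lemma integrableOn_heatIntegrand (hα : -1 < α) (hp : p ≤ 0) (hβ : β ≤ 0) (hT0 : 0 < T)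
    (hT : T ≤ 1) : IntegrableOn (heatIntegrand α p β T a) (Ioo 0 (T / 2)) := by
  have hdom : IntegrableOn (fun s => (log 2) ^ p * (T / 2) ^ β * s ^ α) (Ioo 0 (T / 2)) :=
    ((intervalIntegral.integrableOn_Ioo_rpow_iff (by positivity)).2 hα).const_mul _
  refine hdom.mono' measurable_heatIntegrand.aestronglyMeasurable ?_
  filter_upwards [ae_restrict_mem measurableSet_Ioo] with s hs
  rw [norm_of_nonneg (heatIntegrand_nonneg hs.1 (by linarith [hs.2]) (by linarith [hs.2]))]
  exact heatIntegrand_le hp hβ hT hs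

lemma heatIntegrand_ge (hα : α ≤ 0) (hp : p ≤ 0) (hβ : β ≤ 0) (hT0 : 0 < T) (hT : T ≤ 1 / 2)
    {s : ℝ} (hs : s ∈ Ioo (T / 4) (T / 2)) :
    T ^ α * (3 * -log T) ^ p * T ^ β * exp (-(2 * a ^ 2) / T) ≤ heatIntegrand α p β T a s := by
  obtain ⟨hs1, hs2⟩ := hs
  have hs0 : 0 < s := by linarith
  have hTs : 0 < T - s := by linarith
  have hlog : 0 < -log s := neg_pos.2 (log_neg hs0 (by linarith))
  have hexp : -(2 * a ^ 2) / T ≤ -(a ^ 2) / (T - s) := by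
    rw [div_le_div_iff₀ hT0 hTs]
    nlinarith [mul_nonneg (sq_nonneg a) (by linarith : (0 : ℝ) ≤ T - 2 * s)]
  have hsα : T ^ α ≤ s ^ α := rpow_le_rpow_of_nonpos hs0 (by linarith) hα
  have hlogp : (3 * -log T) ^ p ≤ (-log s) ^ p :=
    rpow_le_rpow_of_nonpos hlog (neg_log_le_three_mul_neg_log hT0 hT hs1.le) hp
  have hTsβ : T ^ β ≤ (T - s) ^ β := rpow_le_rpow_of_nonpos hTs (by linarith) hβ
  have hlogT : 0 ≤ (3 * -log T) ^ p :=
    rpow_nonneg (mul_nonneg zero_le_three (neg_nonneg.2 (log_nonpos hT0.le (by linarith)))) p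
  unfold heatIntegrand
  gcongr ?_ * ?_ * ?_ * ?_
  exact exp_le_exp.2 hexp

theorem le_setIntegral_heatIntegrand (hα₁ : -1 < α) (hα : α ≤ 0) (hp : p ≤ 0) (hβ : β ≤ 0)
    (hT0 : 0 < T) (hT : T ≤ 1 / 2) :
    3 ^ p / 4 * T ^ (α + β + 1) * (-log T) ^ p * exp (-(2 * a ^ 2) / T) ≤
      ∫ s in Ioo 0 (T / 2), heatIntegrand α p β T a s := by
  have hint := integrableOn_heatIntegrand (a := a) hα₁ hp hβ hT0 (by linarith)
  have hsub : Ioo (T / 4) (T / 2) ⊆ Ioo 0 (T / 2) := Ioo_subset_Ioo_left (by positivity)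
  calc 3 ^ p / 4 * T ^ (α + β + 1) * (-log T) ^ p * exp (-(2 * a ^ 2) / T)
      = T ^ α * (3 * -log T) ^ p * T ^ β * exp (-(2 * a ^ 2) / T) *
          volume.real (Ioo (T / 4) (T / 2)) := by
        rw [Real.volume_real_Ioo_of_le (by linarith), mul_rpow (by norm_num)
          (neg_nonneg.2 (log_nonpos hT0.le (by linarith))), rpow_add hT0, rpow_add hT0, rpow_one]
        ring
    _ ≤ ∫ s in Ioo (T / 4) (T / 2), heatIntegrand α p β T a s :=
        setIntegral_ge_of_const_le_real measurableSet_Ioo (by simp)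
          (fun s hs => heatIntegrand_ge hα hp hβ hT0 hT hs) (hint.mono_set hsub)
    _ ≤ ∫ s in Ioo 0 (T / 2), heatIntegrand α p β T a s := by
        refine setIntegral_mono_set hint ?_ hsub.eventuallyLE
        filter_upwards [ae_restrict_mem measurableSet_Ioo] with s hs
        exact heatIntegrand_nonneg hs.1 (by linarith [hs.2]) (by linarith [hs.2])

end

theorem stmt_10_general (ε : ℝ) (hε : 0 < ε) :
    ∃ c : ℝ, 0 < c ∧ ∀ T : ℝ, 0 < T → T ≤ 1/2 → ∀ a : ℝ,
      c * T ^ (-(3/4) : ℝ) * (-Real.log T) ^ (-(1/4) - ε) * Real.exp (-(2*a^2)/T) ≤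
        ∫ s in Ioo (0:ℝ) (T/2),
          s ^ (-(1/4) : ℝ) * (-Real.log s) ^ (-(1/4) - ε) *
            (T - s) ^ (-(3/2) : ℝ) * Real.exp (-(a^2)/(T - s)) := by
  refine ⟨3 ^ (-(1/4) - ε) / 4, by positivity, fun T hT hT' a => ?_⟩
  have h := le_setIntegral_heatIntegrand (α := -(1/4)) (p := -(1/4) - ε) (β := -(3/2)) (a := a)
    (by norm_num) (by norm_num) (by linarith) (by norm_num) hT hT'
  rwa [show (-(1/4) + -(3/2) + 1 : ℝ) = -(3/4) by norm_num] at h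

theorem stmt_10 (ε : ℝ) (hε : 0 < ε) (hε' : ε ≤ 1/4) :
    ∃ c : ℝ, 0 < c ∧ ∀ T : ℝ, 0 < T → T ≤ 1/2 → ∀ a : ℝ,
      c * T ^ (-(3/4) : ℝ) * (-Real.log T) ^ (-(1/4) - ε) * Real.exp (-(2*a^2)/T) ≤
        ∫ s in Ioo (0:ℝ) (T/2),
          s ^ (-(1/4) : ℝ) * (-Real.log s) ^ (-(1/4) - ε) *
            (T - s) ^ (-(3/2) : ℝ) * Real.exp (-(a^2)/(T - s)) :=
  stmt_10_general ε hε
end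

section
/- Let 0 < ε ≤ 1/4, let c₁, c₂ > 0, and let 0 < r ≤ 1/2. Set D = {(x, t) ∈ ℝ² : 0 < t < r², √t < x < r}, and suppose f : D → ℝ is measurable and satisfies |f(x, t)| ≥ c₁ t^{-3/4} (-ln t)^{-1/4-ε} e^{-x²/t} - c₂ t^{-1/4} (-ln t)^{-1/4-ε} for almost every (x, t) ∈ D. Then ∫_D |f(x, t)|² dx dt = ∞. -/
/-!
On the subregion `√t < x < √(2t)` of `D` one has `e^{-x²/t} ≥ e^{-2}`, so there the lower bound
dominates `c₁ e^{-2} t^{-3/4} L^{-1/4-ε}` with `L = -log t`, minus `c₂ t^{-1/4} L^{-1/4-ε}`.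
The subtracted term is square integrable on `D` (its square is at most `c₂² t^{-1/2}`), so if `|f|²`
were integrable then so would be `t^{-3/2} L^{-1/2-2ε}` on the subregion. Integrating out `x`, whose
fibre has length `(√2 - 1)√t`, leaves `t⁻¹ L^{-1/2-2ε}` on `(0, r²/2)`; since `ε ≤ 1/4` this is at
least `(t L)⁻¹ = -(d/dt) log L`, which is not integrable at `0` because `log L → ∞`.
-/

open MeasureTheory Real Set Filter Topology Asymptotics

lemma one_div_four_le_exp_neg_one : (1 : ℝ) / 4 ≤ exp (-1) := by
  rw [exp_neg, le_inv_comm₀ (by norm_num) (exp_pos 1)]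
  linarith [exp_one_lt_d9]

lemma one_le_neg_log {t : ℝ} (ht : 0 < t) (h : t ≤ exp (-1)) : 1 ≤ -log t := by
  have := log_le_log ht h
  rw [log_exp] at this
  linarith

lemma exp_neg_two_le_exp_neg_sq_div {x t : ℝ} (ht : 0 < t) (hx : 0 ≤ x) (hxt : x < √(2 * t)) :
    exp (-2) ≤ exp (-x ^ 2 / t) := by
  rw [exp_le_exp, neg_div, neg_le_neg_iff, div_le_iff₀ ht]
  nlinarith [(lt_sqrt hx).1 hxt]

lemma sq_mul_rpow_mul_rpow {c t u a b : ℝ} (ht : 0 ≤ t) (hu : 0 ≤ u) :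
    (c * t ^ a * u ^ b) ^ 2 = c ^ 2 * t ^ (2 * a) * u ^ (2 * b) := by
  rw [mul_comm 2 a, mul_comm 2 b, rpow_mul ht, rpow_mul hu, rpow_two, rpow_two]
  ring

lemma sq_mul_le_two_mul_sq_add_sq {a e E y h : ℝ} (ha : 0 ≤ a) (hE : 0 ≤ E) (hEe : E ≤ e)
    (hy : a * e - h ≤ y) : (a * E) ^ 2 ≤ 2 * (y ^ 2 + h ^ 2) :=
  calc (a * E) ^ 2 ≤ (y + h) ^ 2 :=
        pow_le_pow_left₀ (by positivity) (by nlinarith [mul_le_mul_of_nonneg_left hEe ha]) 2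
    _ ≤ 2 * (y ^ 2 + h ^ 2) := add_sq_le

lemma sqrt_two_mul_sub_sqrt_mul_sq {c t u q : ℝ} (ht : 0 < t) (hu : 0 ≤ u) :
    (√(2 * t) - √t) * (c * t ^ (-(3/4) : ℝ) * u ^ q) ^ 2
      = (√2 - 1) * c ^ 2 * (t⁻¹ * u ^ (2 * q)) := by
  have hpow : √t * t ^ (2 * (-(3/4) : ℝ)) = t⁻¹ := by
    rw [sqrt_eq_rpow, ← rpow_add ht, ← rpow_neg_one]
    norm_num
  rw [sq_mul_rpow_mul_rpow ht.le hu, sqrt_mul zero_le_two]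
  linear_combination ((√2 - 1) * c ^ 2 * u ^ (2 * q)) * hpow

lemma hasDerivAt_log_neg_log {t : ℝ} (ht : 0 < t) (ht1 : t < 1) :
    HasDerivAt (fun t => log (-log t)) (-(t * -log t)⁻¹) t := by
  have hL : -log t ≠ 0 := by linarith [log_neg ht ht1]
  have h : HasDerivAt (fun x => -log x) (-t⁻¹) t := (hasDerivAt_log ht.ne').neg
  convert h.log hL using 1
  field_simp

lemma not_integrableOn_inv_mul_neg_log_rpow {p a : ℝ} (hp : -1 ≤ p) (ha : 0 < a) :
    ¬ IntegrableOn (fun t => t⁻¹ * (-log t) ^ p) (Ioo 0 a) := by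
  have hsmall : ∀ᶠ t in 𝓝[>] (0 : ℝ), t ∈ Ioo 0 (exp (-1)) := Ioo_mem_nhdsGT (exp_pos _)
  refine not_integrableOn_of_tendsto_norm_atTop_of_deriv_isBigO_filter (𝓝[>] 0)
    (Ioo_mem_nhdsGT ha) (f := fun t => log (-log t)) ?_ ?_ ?_
  · filter_upwards [hsmall] with t ht
    exact (hasDerivAt_log_neg_log ht.1 (ht.2.trans (by simp))).differentiableAt
  · exact tendsto_norm_atTop_atTop.comp
      (tendsto_log_atTop.comp (tendsto_neg_atBot_atTop.comp tendsto_log_nhdsGT_zero))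
  · refine IsBigO.of_bound 1 ?_
    filter_upwards [hsmall] with t ⟨ht0, ht1⟩
    have hL := one_le_neg_log ht0 ht1.le
    rw [(hasDerivAt_log_neg_log ht0 (ht1.trans (by simp))).deriv, norm_neg, one_mul,
      norm_of_nonneg (by positivity), norm_of_nonneg (by positivity), mul_inv]
    gcongr
    simpa only [rpow_neg_one] using rpow_le_rpow_of_exponent_le hL hp

lemma integrableOn_rpow_mul_neg_log_rpow {s q b : ℝ} (hs : -1 < s) (hq : q ≤ 0)
    (hb : b ≤ exp (-1)) : IntegrableOn (fun t => t ^ s * (-log t) ^ q) (Ioo 0 b) := by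
  have hdom : IntegrableOn (fun t : ℝ => t ^ s) (Ioo 0 b) :=
    ((intervalIntegral.integrableOn_Ioo_rpow_iff one_pos).2 hs).mono_set
      (Ioo_subset_Ioo_right (hb.trans (by simp)))
  refine hdom.mono' (by fun_prop) ?_
  filter_upwards [self_mem_ae_restrict measurableSet_Ioo] with t ⟨ht0, htb⟩
  have hL := one_le_neg_log ht0 (htb.le.trans hb)
  rw [norm_of_nonneg (by positivity)]
  exact mul_le_of_le_one_right (by positivity) (rpow_le_one_of_one_le_of_nonpos hL hq)

lemma IntegrableOn.comp_snd_prod {α β E : Type*} [MeasurableSpace α] [MeasurableSpace β]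
    [NormedAddCommGroup E] {μ : Measure α} {ν : Measure β} [SFinite μ] [SFinite ν] {g : β → E}
    {s : Set α} {t : Set β} (hs : μ s ≠ ⊤) (hg : IntegrableOn g t ν) :
    IntegrableOn (fun p : α × β => g p.2) (s ×ˢ t) (μ.prod ν) := by
  have : IsFiniteMeasure (μ.restrict s) := isFiniteMeasure_restrict.2 hs
  rw [IntegrableOn, ← Measure.prod_restrict]
  exact hg.comp_snd _

lemma integrableOn_sq_mul_rpow_neg_one_div_four_mul_neg_log_rpow {c q r b : ℝ} (hq : q ≤ 0)
    (hb : b ≤ exp (-1)) :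
    IntegrableOn (fun p : ℝ × ℝ => (c * p.2 ^ (-(1/4) : ℝ) * (-log p.2) ^ q) ^ 2)
      (Ioo 0 r ×ˢ Ioo 0 b) := by
  have h1 := (integrableOn_rpow_mul_neg_log_rpow (s := -(1/2)) (q := 2 * q) (by norm_num)
    (by linarith) hb).const_mul (c ^ 2)
  refine (IntegrableOn.comp_snd_prod (μ := volume) measure_Ioo_lt_top.ne h1).congr_fun ?_
    (measurableSet_Ioo.prod measurableSet_Ioo)
  rintro ⟨x, t⟩ ⟨-, ht0, htb⟩
  dsimp only
  rw [sq_mul_rpow_mul_rpow ht0.le (by linarith [one_le_neg_log ht0 (htb.le.trans hb)])]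
  ring_nf

lemma measurableSet_fiberwise_Ioo {φ ψ : ℝ → ℝ} {T : Set ℝ} (hT : MeasurableSet T)
    (hφ : Measurable φ) (hψ : Measurable ψ) :
    MeasurableSet {p : ℝ × ℝ | p.2 ∈ T ∧ p.1 ∈ Ioo (φ p.2) (ψ p.2)} :=
  (measurable_snd hT).inter ((measurableSet_lt (hφ.comp measurable_snd) measurable_fst).inter
    (measurableSet_lt measurable_fst (hψ.comp measurable_snd)))

lemma integrableOn_mul_norm_of_integrableOn_fiberwise_Ioo {G φ ψ : ℝ → ℝ} {T : Set ℝ}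
    (hT : MeasurableSet T) (hφ : Measurable φ) (hψ : Measurable ψ) (hφψ : ∀ t ∈ T, φ t ≤ ψ t)
    (hG : IntegrableOn (fun p : ℝ × ℝ => G p.2) {p | p.2 ∈ T ∧ p.1 ∈ Ioo (φ p.2) (ψ p.2)}) :
    IntegrableOn (fun t => (ψ t - φ t) * ‖G t‖) T := by
  set S := {p : ℝ × ℝ | p.2 ∈ T ∧ p.1 ∈ Ioo (φ p.2) (ψ p.2)}
  have hind := (integrable_indicator_iff (measurableSet_fiberwise_Ioo hT hφ hψ)).2 hG
  rw [Measure.volume_eq_prod] at hind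
  have hfib := ((integrable_prod_iff' hind.aestronglyMeasurable).1 hind).2.integrableOn (s := T)
  refine hfib.congr_fun (fun t ht => ?_) hT
  have hslice : (fun x => ‖S.indicator (fun p => G p.2) (x, t)‖)
      = (Ioo (φ t) (ψ t)).indicator (fun _ => ‖G t‖) := by
    ext x
    by_cases hx : x ∈ Ioo (φ t) (ψ t)
    · rw [indicator_of_mem hx, indicator_of_mem (show (x, t) ∈ S from ⟨ht, hx⟩)]
    · rw [indicator_of_notMem hx, indicator_of_notMem (fun h : (x, t) ∈ S => hx h.2), norm_zero]
  dsimp only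
  rw [hslice, integral_indicator_const _ measurableSet_Ioo, volume_real_Ioo_of_le (hφψ t ht),
    smul_eq_mul]

def parabolicStrip (b : ℝ) : Set (ℝ × ℝ) :=
  {p | p.2 ∈ Ioo 0 b ∧ p.1 ∈ Ioo (√p.2) (√(2 * p.2))}

lemma measurableSet_parabolicStrip (b : ℝ) : MeasurableSet (parabolicStrip b) :=
  measurableSet_fiberwise_Ioo (φ := sqrt) (ψ := fun t => √(2 * t)) measurableSet_Ioo
    (by fun_prop) (by fun_prop)

lemma parabolicStrip_subset {r : ℝ} (hr : 0 < r) :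
    parabolicStrip (r ^ 2 / 2) ⊆ {p : ℝ × ℝ | 0 < p.2 ∧ p.2 < r ^ 2 ∧ √p.2 < p.1 ∧ p.1 < r} := by
  rintro ⟨x, t⟩ ⟨⟨ht0, ht⟩, hx, hx'⟩
  refine ⟨ht0, by linarith, hx, hx'.trans ?_⟩
  rw [sqrt_lt' hr]
  linarith

lemma not_integrableOn_sq_rpow_mul_neg_log_rpow_parabolicStrip {c q b : ℝ} (hc : c ≠ 0)
    (hq : -1 ≤ 2 * q) (hb0 : 0 < b) (hb : b ≤ exp (-1)) :
    ¬ IntegrableOn (fun p : ℝ × ℝ => (c * p.2 ^ (-(3/4) : ℝ) * (-log p.2) ^ q) ^ 2)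
      (parabolicStrip b) := by
  intro hG
  have hfib := integrableOn_mul_norm_of_integrableOn_fiberwise_Ioo (φ := sqrt)
    (ψ := fun t => √(2 * t)) (T := Ioo 0 b)
    (G := fun t => (c * t ^ (-(3/4) : ℝ) * (-log t) ^ q) ^ 2) measurableSet_Ioo
    (by fun_prop) (by fun_prop) (fun t ht => sqrt_le_sqrt (by linarith [ht.1])) hG
  have hK : 0 < (√2 - 1) * c ^ 2 :=
    mul_pos (sub_pos.2 (by rw [lt_sqrt zero_le_one]; norm_num)) (by positivity)
  refine not_integrableOn_inv_mul_neg_log_rpow hq hb0 ((integrable_const_mul_iff hK.ne'.isUnit _).1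
      (hfib.congr_fun (fun t ⟨ht0, htb⟩ => ?_) measurableSet_Ioo))
  have hL := one_le_neg_log ht0 (htb.le.trans hb)
  dsimp only
  rw [norm_of_nonneg (sq_nonneg _), sqrt_two_mul_sub_sqrt_mul_sq ht0 (by linarith)]

theorem stmt_16_general (ε c₁ c₂ r : ℝ) (hε : 0 < ε) (hε' : ε ≤ 1/4)
    (hc₁ : 0 < c₁) (hr : 0 < r) (hr' : r ≤ 1/2)
    (D : Set (ℝ × ℝ))
    (hD : D = {p : ℝ × ℝ | 0 < p.2 ∧ p.2 < r^2 ∧ Real.sqrt p.2 < p.1 ∧ p.1 < r})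
    (f : ℝ × ℝ → ℝ)
    (hlow : ∀ᵐ p ∂(volume.restrict D),
      c₁ * p.2 ^ (-(3/4) : ℝ) * (-Real.log p.2) ^ (-(1/4) - ε) * Real.exp (-(p.1^2)/p.2)
        - c₂ * p.2 ^ (-(1/4) : ℝ) * (-Real.log p.2) ^ (-(1/4) - ε) ≤ |f p|) :
    ¬ IntegrableOn (fun p : ℝ × ℝ => |f p|^2) D volume := by
  subst hD
  intro hI
  set q := -(1/4) - ε with hq
  have hr2 : r ^ 2 ≤ exp (-1) := (by nlinarith : r ^ 2 ≤ 1 / 4).trans one_div_four_le_exp_neg_one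
  have hDsub : {p : ℝ × ℝ | 0 < p.2 ∧ p.2 < r ^ 2 ∧ √p.2 < p.1 ∧ p.1 < r}
      ⊆ Ioo 0 r ×ˢ Ioo 0 (r ^ 2) :=
    fun p hp => ⟨⟨(sqrt_nonneg _).trans_lt hp.2.2.1, hp.2.2.2⟩, hp.1, hp.2.1⟩
  have hH := (integrableOn_sq_mul_rpow_neg_one_div_four_mul_neg_log_rpow (c := c₂)
    (by linarith : q ≤ 0) hr2).mono_set hDsub
  have hG : IntegrableOn
      (fun p : ℝ × ℝ => (c₁ * exp (-2) * p.2 ^ (-(3/4) : ℝ) * (-log p.2) ^ q) ^ 2)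
      (parabolicStrip (r ^ 2 / 2)) := by
    refine Integrable.mono
      (IntegrableOn.mono_set ((hI.add hH).const_mul 2) (parabolicStrip_subset hr)) (by fun_prop) ?_
    filter_upwards [self_mem_ae_restrict (measurableSet_parabolicStrip _),
      ae_restrict_of_ae_restrict_of_subset (parabolicStrip_subset hr) hlow]
      with ⟨x, t⟩ ⟨⟨ht0, ht⟩, hx, hx'⟩ hlowp
    have hL := one_le_neg_log ht0 (by linarith)
    have := sq_mul_le_two_mul_sq_add_sq (a := c₁ * t ^ (-(3/4) : ℝ) * (-log t) ^ q)
      (by positivity) (exp_pos _).le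
      (exp_neg_two_le_exp_neg_sq_div ht0 ((sqrt_nonneg t).trans hx.le) hx') hlowp
    rw [norm_of_nonneg (sq_nonneg _), Pi.add_apply, norm_of_nonneg (by positivity)]
    exact (le_of_eq (by ring)).trans this
  exact not_integrableOn_sq_rpow_mul_neg_log_rpow_parabolicStrip (by positivity)
    (by linarith) (by positivity) ((half_le_self (sq_nonneg r)).trans hr2) hG

/-- If `|f(x,t)| ≥ c₁ t^{-3/4}(-ln t)^{-1/4-ε} e^{-x²/t} - c₂ t^{-1/4}(-ln t)^{-1/4-ε}`
a.e. on `D = {(x,t) : 0 < t < r², √t < x < r}`, then `∫_D |f|² = ∞`. -/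
theorem stmt_16 (ε c₁ c₂ r : ℝ) (hε : 0 < ε) (hε' : ε ≤ 1/4)
    (hc₁ : 0 < c₁) (hc₂ : 0 < c₂) (hr : 0 < r) (hr' : r ≤ 1/2)
    (D : Set (ℝ × ℝ))
    (hD : D = {p : ℝ × ℝ | 0 < p.2 ∧ p.2 < r^2 ∧ Real.sqrt p.2 < p.1 ∧ p.1 < r})
    (f : ℝ × ℝ → ℝ) (hf : Measurable f)
    (hlow : ∀ᵐ p ∂(volume.restrict D),
      c₁ * p.2 ^ (-(3/4) : ℝ) * (-Real.log p.2) ^ (-(1/4) - ε) * Real.exp (-(p.1^2)/p.2)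
        - c₂ * p.2 ^ (-(1/4) : ℝ) * (-Real.log p.2) ^ (-(1/4) - ε) ≤ |f p|) :
    ¬ IntegrableOn (fun p : ℝ × ℝ => |f p|^2) D volume :=
  stmt_16_general ε c₁ c₂ r hε hε' hc₁ hr hr' D hD f hlow
end

section
/- Let 0 < ε ≤ 1/4. There exists a constant c > 0 such that for every a > 0 and every T with 0 < T ≤ 1/2 satisfying a² < T < 2a², ∫₀^T (T - s)^{-1/2} (a² + T - s)^{-1/2} s^{-1/4} (-ln s)^{-1/4-ε} ds ≤ c T^{-1/4} (-ln T)^{-1/4-ε}. -/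
open MeasureTheory Real Set

theorem stmt_17 (ε : ℝ) (hε : 0 < ε) (hε' : ε ≤ 1/4) :
    ∃ c : ℝ, 0 < c ∧ ∀ a : ℝ, 0 < a → ∀ T : ℝ, 0 < T → T ≤ 1/2 → a^2 < T → T < 2*a^2 →
      (∫ s in Ioo (0:ℝ) T,
          (T - s) ^ (-(1/2) : ℝ) * (a^2 + T - s) ^ (-(1/2) : ℝ) *
            s ^ (-(1/4) : ℝ) * (-Real.log s) ^ (-(1/4) - ε)) ≤
        c * T ^ (-(1/4) : ℝ) * (-Real.log T) ^ (-(1/4) - ε) := by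
  refine ⟨8 * Real.sqrt 2, by positivity, ?_⟩
  intro a ha T hT hT2 haT hTa
  have hlogT : 0 < -Real.log T := by
    have := Real.log_neg hT (by linarith)
    linarith
  set L := (-Real.log T) ^ (-(1/4) - ε) with hL
  have hLpos : 0 < L := Real.rpow_pos_of_pos hlogT _
  have hT2pos : (0:ℝ) < T/2 := by linarith
  set C := (T/2) ^ (-(1/2):ℝ) * L with hC
  have hCpos : 0 < C := mul_pos (Real.rpow_pos_of_pos hT2pos _) hLpos
  -- pointwise bound
  have key : ∀ s ∈ Ioo (0:ℝ) T,
      (T - s) ^ (-(1/2) : ℝ) * (a^2 + T - s) ^ (-(1/2) : ℝ) *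
          s ^ (-(1/4) : ℝ) * (-Real.log s) ^ (-(1/4) - ε)
        ≤ C * ((T - s) ^ (-(3/4):ℝ) + s ^ (-(3/4):ℝ)) := by
    rintro s ⟨hs0, hsT⟩
    have hu : 0 < T - s := by linarith
    have hls : 0 < -Real.log s := by
      have := Real.log_neg hs0 (by linarith : s < 1)
      linarith
    have hA : (a^2 + T - s) ^ (-(1/2):ℝ) ≤ (T/2) ^ (-(1/2):ℝ) :=
      Real.rpow_le_rpow_of_nonpos hT2pos (by nlinarith) (by norm_num)
    have hB : (-Real.log s) ^ (-(1/4) - ε) ≤ L := by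
      rw [hL]
      refine Real.rpow_le_rpow_of_nonpos hlogT ?_ (by linarith)
      have : Real.log s ≤ Real.log T := Real.log_le_log hs0 hsT.le
      linarith
    have hD : (T - s) ^ (-(1/2):ℝ) * s ^ (-(1/4):ℝ)
        ≤ (T - s) ^ (-(3/4):ℝ) + s ^ (-(3/4):ℝ) := by
      rcases le_total s (T - s) with h | h
      · have h1 : (T - s) ^ (-(1/2):ℝ) ≤ s ^ (-(1/2):ℝ) :=
          Real.rpow_le_rpow_of_nonpos hs0 h (by norm_num)
        have h2 : (T - s) ^ (-(1/2):ℝ) * s ^ (-(1/4):ℝ)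
            ≤ s ^ (-(1/2):ℝ) * s ^ (-(1/4):ℝ) :=
          mul_le_mul_of_nonneg_right h1 (Real.rpow_nonneg hs0.le _)
        have h3 : s ^ (-(1/2):ℝ) * s ^ (-(1/4):ℝ) = s ^ (-(3/4):ℝ) := by
          rw [← Real.rpow_add hs0]; norm_num
        have h4 : (0:ℝ) ≤ (T - s) ^ (-(3/4):ℝ) := Real.rpow_nonneg hu.le _
        linarith [h2, h3 ▸ h2]
      · have h1 : s ^ (-(1/4):ℝ) ≤ (T - s) ^ (-(1/4):ℝ) :=
          Real.rpow_le_rpow_of_nonpos hu h (by norm_num)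
        have h2 : (T - s) ^ (-(1/2):ℝ) * s ^ (-(1/4):ℝ)
            ≤ (T - s) ^ (-(1/2):ℝ) * (T - s) ^ (-(1/4):ℝ) :=
          mul_le_mul_of_nonneg_left h1 (Real.rpow_nonneg hu.le _)
        have h3 : (T - s) ^ (-(1/2):ℝ) * (T - s) ^ (-(1/4):ℝ) = (T - s) ^ (-(3/4):ℝ) := by
          rw [← Real.rpow_add hu]; norm_num
        have h4 : (0:ℝ) ≤ s ^ (-(3/4):ℝ) := Real.rpow_nonneg hs0.le _
        linarith [h3 ▸ h2]
    calc (T - s) ^ (-(1/2) : ℝ) * (a^2 + T - s) ^ (-(1/2) : ℝ) *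
            s ^ (-(1/4) : ℝ) * (-Real.log s) ^ (-(1/4) - ε)
        = ((T - s) ^ (-(1/2):ℝ) * s ^ (-(1/4):ℝ)) *
            ((a^2 + T - s) ^ (-(1/2):ℝ) * (-Real.log s) ^ (-(1/4) - ε)) := by ring
      _ ≤ ((T - s) ^ (-(3/4):ℝ) + s ^ (-(3/4):ℝ)) * ((T/2) ^ (-(1/2):ℝ) * L) := by
          apply mul_le_mul hD
          · exact mul_le_mul hA hB (Real.rpow_nonneg hls.le _)
              (Real.rpow_nonneg hT2pos.le _)
          · exact mul_nonneg (Real.rpow_nonneg (by linarith) _) (Real.rpow_nonneg hls.le _)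
          · exact add_nonneg (Real.rpow_nonneg hu.le _) (Real.rpow_nonneg hs0.le _)
      _ = C * ((T - s) ^ (-(3/4):ℝ) + s ^ (-(3/4):ℝ)) := by rw [hC]; ring
  -- integrability of majorant pieces
  have hi1 : IntegrableOn (fun s : ℝ => s ^ (-(3/4):ℝ)) (Ioo 0 T) := by
    have h := intervalIntegral.intervalIntegrable_rpow' (a := 0) (b := T) (r := -(3/4)) (by norm_num)
    exact ((intervalIntegrable_iff_integrableOn_Ioc_of_le hT.le).1 h).mono_set
      Ioo_subset_Ioc_self
  have hi2 : IntegrableOn (fun s : ℝ => (T - s) ^ (-(3/4):ℝ)) (Ioo 0 T) := by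
    have h := (intervalIntegral.intervalIntegrable_rpow' (a := 0) (b := T) (r := -(3/4))
      (by norm_num)).comp_sub_left T
    simp only [sub_zero, sub_self] at h
    have h' := h.symm
    exact ((intervalIntegrable_iff_integrableOn_Ioc_of_le hT.le).1 h').mono_set
      Ioo_subset_Ioc_self
  have hig : IntegrableOn
      (fun s : ℝ => C * ((T - s) ^ (-(3/4):ℝ) + s ^ (-(3/4):ℝ))) (Ioo 0 T) :=
    (hi2.add hi1).const_mul C
  -- compare integrals
  have hle : (∫ s in Ioo (0:ℝ) T,
      (T - s) ^ (-(1/2) : ℝ) * (a^2 + T - s) ^ (-(1/2) : ℝ) *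
        s ^ (-(1/4) : ℝ) * (-Real.log s) ^ (-(1/4) - ε))
      ≤ ∫ s in Ioo (0:ℝ) T, C * ((T - s) ^ (-(3/4):ℝ) + s ^ (-(3/4):ℝ)) := by
    apply integral_mono_of_nonneg
    · refine (ae_restrict_iff' measurableSet_Ioo).2 (Filter.Eventually.of_forall ?_)
      rintro s ⟨hs0, hsT⟩
      have hu : 0 < T - s := by linarith
      have hls : 0 < -Real.log s := by
        have := Real.log_neg hs0 (by linarith : s < 1)
        linarith
      have : 0 < a^2 + T - s := by nlinarith
      positivity
    · exact hig
    · exact (ae_restrict_iff' measurableSet_Ioo).2 (Filter.Eventually.of_forall key)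
  -- compute the majorant integral
  have e1 : (∫ s in Ioo (0:ℝ) T, s ^ (-(3/4):ℝ)) = 4 * T ^ ((1/4):ℝ) := by
    rw [← integral_Ioc_eq_integral_Ioo, ← intervalIntegral.integral_of_le hT.le,
      integral_rpow (Or.inl (by norm_num))]
    rw [Real.zero_rpow (by norm_num)]
    norm_num
    ring
  have e2 : (∫ s in Ioo (0:ℝ) T, (T - s) ^ (-(3/4):ℝ)) = 4 * T ^ ((1/4):ℝ) := by
    rw [← integral_Ioc_eq_integral_Ioo, ← intervalIntegral.integral_of_le hT.le]
    rw [intervalIntegral.integral_comp_sub_left (fun x : ℝ => x ^ (-(3/4):ℝ)) T]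
    simp only [sub_zero, sub_self]
    rw [integral_rpow (Or.inl (by norm_num)), Real.zero_rpow (by norm_num)]
    norm_num
    ring
  have e3 : (∫ s in Ioo (0:ℝ) T, C * ((T - s) ^ (-(3/4):ℝ) + s ^ (-(3/4):ℝ)))
      = C * (8 * T ^ ((1/4):ℝ)) := by
    rw [integral_const_mul, integral_add hi2 hi1, e1, e2]
    ring
  -- final algebra
  have e4 : C * (8 * T ^ ((1/4):ℝ)) = 8 * Real.sqrt 2 * T ^ (-(1/4):ℝ) * L := by
    rw [hC]
    have hhalf : (T/2:ℝ) ^ (-(1/2):ℝ) = T ^ (-(1/2):ℝ) * (2:ℝ) ^ ((1/2):ℝ) := by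
      rw [Real.div_rpow hT.le (by norm_num), Real.rpow_neg (by norm_num : (0:ℝ) ≤ 2)]
      field_simp
    have hTT : T ^ (-(1/2):ℝ) * T ^ ((1/4):ℝ) = T ^ (-(1/4):ℝ) := by
      rw [← Real.rpow_add hT]; norm_num
    have hs2 : Real.sqrt 2 = (2:ℝ) ^ ((1/2):ℝ) := Real.sqrt_eq_rpow 2
    rw [hhalf, hs2]
    calc T ^ (-(1/2):ℝ) * (2:ℝ) ^ ((1/2):ℝ) * L * (8 * T ^ ((1/4):ℝ))
        = 8 * (2:ℝ) ^ ((1/2):ℝ) * (T ^ (-(1/2):ℝ) * T ^ ((1/4):ℝ)) * L := by ring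
      _ = 8 * (2:ℝ) ^ ((1/2):ℝ) * T ^ (-(1/4):ℝ) * L := by rw [hTT]
  calc (∫ s in Ioo (0:ℝ) T,
      (T - s) ^ (-(1/2) : ℝ) * (a^2 + T - s) ^ (-(1/2) : ℝ) *
        s ^ (-(1/4) : ℝ) * (-Real.log s) ^ (-(1/4) - ε))
      ≤ C * (8 * T ^ ((1/4):ℝ)) := e3 ▸ hle
    _ = 8 * Real.sqrt 2 * T ^ (-(1/4):ℝ) * L := e4
end

section
/- Let 0 < ε ≤ 1/4. There exists a constant c > 0 such that for every a > 0 and every T with 0 < T ≤ 1/2 satisfying 2a² < T, ∫₀^T (T - s)^{-1/2} (a² + T - s)^{-1/2} s^{-1/4} (-ln s)^{-1/4-ε} ds ≤ c T^{-1/4} (-ln T)^{-1/4-ε} (1 + ln(T/(2a²))). -/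
/-!
Since `-log` decreases on `(0, 1)` and the exponent `-1/4 - ε` is negative, the logarithmic
factor is at most its value at `s = T` and comes out of the integral. What remains is
`∫₀ᵀ k(T - s) s^{-1/4} ds` with the kernel `k(u) = u^{-1/2} (a² + u)^{-1/2}`. On `[0, T/2]` the
kernel is at most `(T/2)⁻¹`, giving `O(T^{-1/4})`; on `[T/2, T]` the weight is at most
`(T/2)^{-1/4}`, and `∫₀^{T/2} k ≤ 2 + log (T/(2a²))` because `k(u) ≤ a⁻¹ u^{-1/2}` below `a²`
and `k(u) ≤ u⁻¹` above it.
-/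

open MeasureTheory Real Set

noncomputable def invSqrtKernel (b u : ℝ) : ℝ := u ^ (-(1/2) : ℝ) * (b + u) ^ (-(1/2) : ℝ)

section invSqrtKernel

variable {b u : ℝ}

lemma invSqrtKernel_nonneg (hb : 0 ≤ b) (hu : 0 ≤ u) : 0 ≤ invSqrtKernel b u :=
  mul_nonneg (rpow_nonneg hu _) (rpow_nonneg (by linarith) _)

lemma invSqrtKernel_le_inv (hb : 0 ≤ b) (hu : 0 < u) : invSqrtKernel b u ≤ u⁻¹ := by
  calc invSqrtKernel b u ≤ u ^ (-(1/2) : ℝ) * u ^ (-(1/2) : ℝ) :=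
        mul_le_mul_of_nonneg_left (rpow_le_rpow_of_nonpos hu (by linarith) (by norm_num))
          (rpow_nonneg hu.le _)
    _ = u⁻¹ := by rw [← rpow_add hu]; norm_num [rpow_neg_one]

lemma invSqrtKernel_le_rpow (hb : 0 < b) (hu : 0 ≤ u) :
    invSqrtKernel b u ≤ b ^ (-(1/2) : ℝ) * u ^ (-(1/2) : ℝ) := by
  rw [invSqrtKernel, mul_comm]
  exact mul_le_mul_of_nonneg_right (rpow_le_rpow_of_nonpos hb (by linarith) (by norm_num))
    (rpow_nonneg hu _)

lemma intervalIntegrable_invSqrtKernel (hb : 0 < b) {c : ℝ} (hc : 0 ≤ c) :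
    IntervalIntegrable (invSqrtKernel b) volume 0 c := by
  refine (intervalIntegral.intervalIntegrable_rpow' (by norm_num)).mul_continuousOn ?_
  rw [uIcc_of_le hc]
  exact (continuousOn_const.add continuousOn_id).rpow_const fun u hu =>
    Or.inl (add_pos_of_pos_of_nonneg hb hu.1).ne'

lemma integral_invSqrtKernel_le (hb : 0 < b) {c : ℝ} (hbc : b ≤ c) :
    ∫ u in (0:ℝ)..c, invSqrtKernel b u ≤ 2 + log (c / b) := by
  have hint := intervalIntegrable_invSqrtKernel hb (hb.le.trans hbc)
  have hint₁ : IntervalIntegrable (invSqrtKernel b) volume 0 b :=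
    hint.mono_set (by
      rw [uIcc_of_le hb.le, uIcc_of_le (hb.le.trans hbc)]; exact Icc_subset_Icc_right hbc)
  have hint₂ : IntervalIntegrable (invSqrtKernel b) volume b c :=
    hint.mono_set (by
      rw [uIcc_of_le hbc, uIcc_of_le (hb.le.trans hbc)]; exact Icc_subset_Icc_left hb.le)
  have h₁ : ∫ u in (0:ℝ)..b, invSqrtKernel b u ≤ 2 := calc
    _ ≤ ∫ u in (0:ℝ)..b, b ^ (-(1/2) : ℝ) * u ^ (-(1/2) : ℝ) :=
        intervalIntegral.integral_mono_on_of_le_Ioo hb.le hint₁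
          ((intervalIntegral.intervalIntegrable_rpow' (by norm_num)).const_mul _)
          fun u hu => invSqrtKernel_le_rpow hb hu.1.le
    _ = 2 := by
        rw [intervalIntegral.integral_const_mul, integral_rpow (Or.inl (by norm_num)),
          zero_rpow (by norm_num), sub_zero, mul_div_assoc', ← rpow_add hb]
        norm_num
  have h₂ : ∫ u in b..c, invSqrtKernel b u ≤ log (c / b) := calc
    _ ≤ ∫ u in b..c, u⁻¹ :=
        intervalIntegral.integral_mono_on_of_le_Ioo hbc hint₂
          (intervalIntegral.intervalIntegrable_inv (fun u hu => by
            rw [uIcc_of_le hbc] at hu; exact (hb.trans_le hu.1).ne') continuousOn_id)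
          fun u hu => invSqrtKernel_le_inv hb.le (hb.trans hu.1)
    _ = log (c / b) := integral_inv_of_pos hb (hb.trans_le hbc)
  rw [← intervalIntegral.integral_add_adjacent_intervals hint₁ hint₂]
  linarith

end invSqrtKernel

section weighted

variable {b r T : ℝ}

lemma intervalIntegrable_invSqrtKernel_mul_rpow (hb : 0 < b) (hr : -1 < r) (hT : 0 < T) :
    IntervalIntegrable (fun s => invSqrtKernel b (T - s) * s ^ r) volume 0 T := by
  have hT2 : 0 < T / 2 := half_pos hT
  have h₁ : IntervalIntegrable (fun s => invSqrtKernel b (T - s) * s ^ r) volume 0 (T / 2) := by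
    refine (intervalIntegral.intervalIntegrable_rpow' hr).continuousOn_mul ?_
    rw [uIcc_of_le hT2.le]
    refine ContinuousOn.mul ?_ ?_ <;>
      exact ContinuousOn.rpow_const (by fun_prop) fun s hs => Or.inl (by linarith [hs.2])
  have h₂ : IntervalIntegrable (fun s => invSqrtKernel b (T - s) * s ^ r) volume (T / 2) T := by
    have := ((intervalIntegrable_invSqrtKernel hb hT2.le).comp_sub_left T).symm
    rw [sub_zero, sub_half] at this
    refine this.mul_continuousOn (ContinuousOn.rpow_const continuousOn_id fun s hs => Or.inl ?_)
    rw [uIcc_of_le (by linarith)] at hs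
    exact (hT2.trans_le hs.1).ne'
  exact h₁.trans h₂

lemma integral_invSqrtKernel_mul_rpow_le (hb : 0 < b) (hr : -1 < r) (hr₀ : r ≤ 0)
    (hbT : 2 * b ≤ T) :
    ∫ s in (0:ℝ)..T, invSqrtKernel b (T - s) * s ^ r ≤
      (T / 2) ^ r * (1 / (r + 1) + 2 + log (T / (2 * b))) := by
  have hT : 0 < T := by linarith
  have hT2 : 0 < T / 2 := half_pos hT
  have hint := intervalIntegrable_invSqrtKernel_mul_rpow hb hr hT
  have hint₁ := hint.mono_set (c := 0) (d := T / 2) (by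
    rw [uIcc_of_le hT.le, uIcc_of_le hT2.le]; exact Icc_subset_Icc_right (by linarith))
  have hint₂ := hint.mono_set (c := T / 2) (d := T) (by
    rw [uIcc_of_le hT.le, uIcc_of_le (by linarith)]; exact Icc_subset_Icc_left hT2.le)
  have h₁ : ∫ s in (0:ℝ)..T / 2, invSqrtKernel b (T - s) * s ^ r ≤ (T / 2) ^ r / (r + 1) := calc
    _ ≤ ∫ s in (0:ℝ)..T / 2, (T / 2)⁻¹ * s ^ r :=
        intervalIntegral.integral_mono_on_of_le_Ioo hT2.le hint₁
          ((intervalIntegral.intervalIntegrable_rpow' hr).const_mul _) fun s hs => by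
          have hTs : T / 2 ≤ T - s := by linarith [hs.2]
          refine mul_le_mul_of_nonneg_right ?_ (rpow_nonneg hs.1.le _)
          exact (invSqrtKernel_le_inv hb.le (hT2.trans_le hTs)).trans
            (inv_anti₀ hT2 hTs)
    _ = (T / 2) ^ r / (r + 1) := by
        rw [intervalIntegral.integral_const_mul, integral_rpow (Or.inl hr),
          zero_rpow (by linarith), sub_zero, rpow_add_one hT2.ne']
        field_simp
  have h₂ : ∫ s in T / 2..T, invSqrtKernel b (T - s) * s ^ r ≤
      (T / 2) ^ r * (2 + log (T / (2 * b))) := calc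
    _ ≤ ∫ s in T / 2..T, (T / 2) ^ r * invSqrtKernel b (T - s) := by
        refine intervalIntegral.integral_mono_on_of_le_Ioo (by linarith) hint₂ ?_ fun s hs => ?_
        · have := ((intervalIntegrable_invSqrtKernel hb hT2.le).comp_sub_left T).symm
          rw [sub_zero, sub_half] at this
          exact this.const_mul _
        · rw [mul_comm]
          exact mul_le_mul_of_nonneg_right (rpow_le_rpow_of_nonpos hT2 hs.1.le hr₀)
            (invSqrtKernel_nonneg hb.le (by linarith [hs.2]))
    _ = (T / 2) ^ r * ∫ u in (0:ℝ)..T / 2, invSqrtKernel b u := by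
        rw [intervalIntegral.integral_const_mul, intervalIntegral.integral_comp_sub_left
          (invSqrtKernel b), sub_self, sub_half]
    _ ≤ (T / 2) ^ r * (2 + log (T / (2 * b))) := by
        rw [← div_div]
        exact mul_le_mul_of_nonneg_left (integral_invSqrtKernel_le hb (by linarith))
          (rpow_nonneg hT2.le _)
  rw [← intervalIntegral.integral_add_adjacent_intervals hint₁ hint₂]
  linarith [show (T / 2) ^ r * (1 / (r + 1) + 2 + log (T / (2 * b))) =
    (T / 2) ^ r / (r + 1) + (T / 2) ^ r * (2 + log (T / (2 * b))) by ring]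


lemma neg_log_rpow_le_of_le {p s T : ℝ} (hp : p ≤ 0) (hs : 0 < s) (hsT : s ≤ T) (hT : T < 1) :
    (-log s) ^ p ≤ (-log T) ^ p :=
  rpow_le_rpow_of_nonpos (neg_pos.2 (log_neg (hs.trans_le hsT) hT))
    (neg_le_neg (log_le_log hs hsT)) hp

lemma integral_Ioo_le_neg_log_rpow_mul {p : ℝ} (hb : 0 < b) (hr : -1 < r) (hp : p ≤ 0)
    (hT : 0 < T) (hT₁ : T < 1) :
    ∫ s in Ioo 0 T, (T - s) ^ (-(1/2) : ℝ) * (b + T - s) ^ (-(1/2) : ℝ) * s ^ r * (-log s) ^ p ≤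
      (-log T) ^ p * ∫ s in (0:ℝ)..T, invSqrtKernel b (T - s) * s ^ r := by
  have hbound : ∀ s ∈ Ioo 0 T,
      0 ≤ (T - s) ^ (-(1/2) : ℝ) * (b + T - s) ^ (-(1/2) : ℝ) * s ^ r * (-log s) ^ p ∧
      (T - s) ^ (-(1/2) : ℝ) * (b + T - s) ^ (-(1/2) : ℝ) * s ^ r * (-log s) ^ p ≤
        (-log T) ^ p * (invSqrtKernel b (T - s) * s ^ r) := by
    rintro s ⟨hs₀, hsT⟩
    have hK : 0 ≤ invSqrtKernel b (T - s) * s ^ r :=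
      mul_nonneg (invSqrtKernel_nonneg hb.le (by linarith)) (rpow_nonneg hs₀.le _)
    rw [show (T - s) ^ (-(1/2) : ℝ) * (b + T - s) ^ (-(1/2) : ℝ) * s ^ r * (-log s) ^ p =
        (-log s) ^ p * (invSqrtKernel b (T - s) * s ^ r) by
      rw [invSqrtKernel, add_sub_assoc]; ring]
    exact ⟨mul_nonneg (rpow_nonneg (neg_nonneg.2 (log_nonpos hs₀.le (by linarith))) _) hK,
      mul_le_mul_of_nonneg_right (neg_log_rpow_le_of_le hp hs₀ hsT.le hT₁) hK⟩
  have hint := (intervalIntegrable_iff_integrableOn_Ioo_of_le hT.le).1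
    (intervalIntegrable_invSqrtKernel_mul_rpow hb hr hT)
  rw [intervalIntegral.integral_of_le hT.le, integral_Ioc_eq_integral_Ioo, ← integral_const_mul]
  exact integral_mono_of_nonneg
    ((ae_restrict_mem measurableSet_Ioo).mono fun s hs => (hbound s hs).1)
    (hint.const_mul _) ((ae_restrict_mem measurableSet_Ioo).mono fun s hs => (hbound s hs).2)

end weighted

theorem stmt_18_general (ε : ℝ) (hε : 0 < ε) :
    ∃ c : ℝ, 0 < c ∧ ∀ a : ℝ, 0 < a → ∀ T : ℝ, 0 < T → T ≤ 1/2 → 2*a^2 < T →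
      (∫ s in Ioo (0:ℝ) T,
          (T - s) ^ (-(1/2) : ℝ) * (a^2 + T - s) ^ (-(1/2) : ℝ) *
            s ^ (-(1/4) : ℝ) * (-Real.log s) ^ (-(1/4) - ε)) ≤
        c * T ^ (-(1/4) : ℝ) * (-Real.log T) ^ (-(1/4) - ε) * (1 + Real.log (T/(2*a^2))) := by
  refine ⟨2 ^ (1/4 : ℝ) * (10/3), by positivity, fun a ha T hT hT₂ haT => ?_⟩
  have hlogT : 0 < -log T := neg_pos.2 (log_neg hT (by linarith))
  have hL : 0 ≤ log (T / (2 * a ^ 2)) := log_nonneg ((one_le_div (by positivity)).2 haT.le)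
  have hX : 0 ≤ 2 ^ (1/4 : ℝ) * T ^ (-(1/4) : ℝ) * (-log T) ^ (-(1/4) - ε) := by positivity
  calc _ ≤ (-log T) ^ (-(1/4) - ε) *
        ∫ s in (0:ℝ)..T, invSqrtKernel (a ^ 2) (T - s) * s ^ (-(1/4) : ℝ) :=
      integral_Ioo_le_neg_log_rpow_mul (by positivity) (by norm_num) (by linarith) hT
        (by linarith)
    _ ≤ (-log T) ^ (-(1/4) - ε) * ((T / 2) ^ (-(1/4) : ℝ) *
        (1 / (-(1/4) + 1) + 2 + log (T / (2 * a ^ 2)))) :=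
      mul_le_mul_of_nonneg_left (integral_invSqrtKernel_mul_rpow_le (by positivity)
        (by norm_num) (by norm_num) haT.le) (rpow_nonneg hlogT.le _)
    _ = 2 ^ (1/4 : ℝ) * T ^ (-(1/4) : ℝ) * (-log T) ^ (-(1/4) - ε) *
        (10/3 + log (T / (2 * a ^ 2))) := by
      rw [div_rpow hT.le zero_le_two, rpow_neg zero_le_two]
      field_simp
      ring
    _ ≤ _ := by nlinarith [mul_nonneg hX hL]

theorem stmt_18 (ε : ℝ) (hε : 0 < ε) (hε' : ε ≤ 1/4) :
    ∃ c : ℝ, 0 < c ∧ ∀ a : ℝ, 0 < a → ∀ T : ℝ, 0 < T → T ≤ 1/2 → 2*a^2 < T →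
      (∫ s in Ioo (0:ℝ) T,
          (T - s) ^ (-(1/2) : ℝ) * (a^2 + T - s) ^ (-(1/2) : ℝ) *
            s ^ (-(1/4) : ℝ) * (-Real.log s) ^ (-(1/4) - ε)) ≤
        c * T ^ (-(1/4) : ℝ) * (-Real.log T) ^ (-(1/4) - ε) * (1 + Real.log (T/(2*a^2))) :=
  stmt_18_general ε hε
end
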